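/- The derivative at s = −2 of the function s ↦ (1 − 2^{1−s})·ζ(s) equals 7ζ(3)/(4π²). (This is the first derivative at s = −2 of the Witten L-function ζ^W_{SU(2)}(s, g) for g = −I₂, i.e. θ = π, since ζ^W_{SU(2)}(s, −I₂) = Σ_{n≥1} (−1)^{n−1} n^{−s} = (1 − 2^{1−s})·ζ(s).) -/

import Mathlib

open Complex
open scoped Real

/-!
Since `ζ(-2) = 0`, the derivative of `(1 - 2^{1-s}) ζ(s)` at `-2` is `(1 - 2³) ζ'(-2)`.
In the functional equation `ζ(s) = 2 (2π)^{s-1} Γ(1-s) ζ(1-s) sin(πs/2)` the trivial zeros are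
those of the sine, while the other factor is holomorphic there; differentiating gives
`ζ'(-2n) = (-1)ⁿ (2n)! ζ(2n+1) / (2 (2π)^{2n})`, and in particular `ζ'(-2) = -ζ(3) / (4π²)`.
-/

theorem DifferentiableAt.hasDerivAt_mul_of_eq_zero {𝕜 𝔸 : Type*} [NontriviallyNormedField 𝕜]
    [NormedRing 𝔸] [NormedAlgebra 𝕜 𝔸] {f g : 𝕜 → 𝔸} {g' : 𝔸} {x : 𝕜}
    (hf : DifferentiableAt 𝕜 f x) (hg : HasDerivAt g g' x) (hgx : g x = 0) :
    HasDerivAt (fun y ↦ f y * g y) (f x * g') x := by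
  simpa [hgx] using hf.hasDerivAt.fun_mul hg

theorem riemannZeta_eq_mul_sin {s : ℂ} (hs : ∀ n : ℕ, s ≠ n) :
    riemannZeta s =
      2 * (2 * π) ^ (s - 1) * Gamma (1 - s) * riemannZeta (1 - s) * sin (π * s / 2) := by
  have h := riemannZeta_one_sub (s := 1 - s)
    (fun n h ↦ hs (n + 1) (by push_cast; linear_combination -h)) (fun h ↦ hs 0 (by simpa using h))
  rw [sub_sub_cancel, neg_sub] at h
  rw [h, ← cos_pi_div_two_sub]
  ring_nf

theorem sin_cos_pi_mul_neg_two_mul_nat_add_one_div_two (n : ℕ) :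
    sin (π * (-2 * (n + 1)) / 2) = 0 ∧ cos (π * (-2 * (n + 1)) / 2) = (-1) ^ (n + 1) := by
  have : (π * (-2 * (n + 1)) / 2 : ℂ) = ((-((n + 1 : ℕ) * π) : ℝ) : ℂ) := by push_cast; ring
  rw [this, ← ofReal_sin, ← ofReal_cos, Real.sin_neg, Real.cos_neg, Real.sin_nat_mul_pi,
    Real.cos_nat_mul_pi]
  simp

theorem hasDerivAt_riemannZeta_neg_two_mul_nat_add_one (n : ℕ) :
    HasDerivAt riemannZeta
      ((-1) ^ (n + 1) * (2 * n + 2).factorial / (2 * (2 * π) ^ (2 * n + 2)) *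
        riemannZeta (2 * n + 3)) (-2 * (n + 1)) := by
  set s₀ : ℂ := -2 * (n + 1) with hs₀
  have hs₀re : s₀.re < 0 := by simpa [hs₀] using n.cast_add_one_pos (α := ℝ)
  have h1s₀ : 1 - s₀ = (2 * n + 2 : ℕ) + 1 := by rw [hs₀]; push_cast; ring
  have hfactor : DifferentiableAt ℂ
      (fun s ↦ 2 * (2 * π) ^ (s - 1) * Gamma (1 - s) * riemannZeta (1 - s)) s₀ := by
    have hΓ : DifferentiableAt ℂ Gamma (1 - s₀) := differentiableAt_Gamma _ fun m h ↦ by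
      rw [h1s₀] at h
      have := congrArg re h
      norm_num at this
      linarith
    have hζ : DifferentiableAt ℂ riemannZeta (1 - s₀) :=
      differentiableAt_riemannZeta (by rw [h1s₀]; norm_cast; omega)
    fun_prop (disch := simp [Real.pi_ne_zero])
  have hsin : HasDerivAt (fun s ↦ sin (π * s / 2)) (cos (π * s₀ / 2) * (π / 2)) s₀ := by
    simpa using ((hasDerivAt_id s₀).const_mul (π : ℂ)).div_const 2 |>.csin
  have heq : riemannZeta =ᶠ[nhds s₀] fun s ↦
      (2 * (2 * π) ^ (s - 1) * Gamma (1 - s) * riemannZeta (1 - s)) * sin (π * s / 2) := by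
    filter_upwards [continuous_re.continuousAt.eventually_lt_const hs₀re] with s hs
    refine riemannZeta_eq_mul_sin fun m h ↦ ?_
    rw [h, natCast_re] at hs
    exact (Nat.cast_nonneg m).not_gt hs
  obtain ⟨hsin₀, hcos₀⟩ := sin_cos_pi_mul_neg_two_mul_nat_add_one_div_two n
  refine (hfactor.hasDerivAt_mul_of_eq_zero hsin hsin₀).congr_of_eventuallyEq heq |>.congr_deriv ?_
  have hpow : (2 * π : ℂ) ^ (s₀ - 1) = ((2 * π : ℂ) ^ (2 * n + 3))⁻¹ := by
    rw [show s₀ - 1 = ((-(2 * n + 3 : ℕ) : ℤ) : ℂ) by rw [hs₀]; push_cast; ring, cpow_intCast,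
      zpow_neg, zpow_natCast]
  rw [hcos₀, hpow, h1s₀, Gamma_nat_eq_factorial, ← h1s₀,
    show 1 - s₀ = 2 * n + 3 by rw [hs₀]; ring]
  field_simp
  ring

/-- The derivative at `s = -2` of `s ↦ (1 - 2^{1-s}) ζ(s)` equals `7ζ(3)/(4π²)`. -/
theorem deriv_eta_neg_two :
    deriv (fun s : ℂ ↦ (1 - (2 : ℂ) ^ (1 - s)) * riemannZeta s) (-2)
      = 7 * riemannZeta 3 / (4 * (Real.pi : ℂ) ^ 2) := by
  have hζ := hasDerivAt_riemannZeta_neg_two_mul_nat_add_one 0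
  have hζ₀ := riemannZeta_neg_two_mul_nat_add_one 0
  norm_num at hζ hζ₀
  have hfactor : DifferentiableAt ℂ (fun s : ℂ ↦ 1 - (2 : ℂ) ^ (1 - s)) (-2) := by fun_prop
  rw [(hfactor.hasDerivAt_mul_of_eq_zero hζ hζ₀).deriv,
    show (1 - -2 : ℂ) = (3 : ℕ) by norm_num, cpow_natCast]
  field_simp
  ring
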